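/- Let α_1, …, α_n ≥ 0 and w_1, …, w_n ≥ 0 with ∑_i α_i^{2q} w_i > 0 and w_i > 0 for at least one i, and define R = (∑_i α_i^{2q+1} w_i)/(∑_i α_i^{2q} w_i). Then R^{2q+1} ≥ (∑_i α_i^{2q+1} w_i)/(∑_i w_i); in particular, if α_1 = 1 then R^{2q+1} ≥ w_1/(∑_i w_i). -/

import Mathlib

/-!
With `A = ∑ αᵢ^(m+1) wᵢ`, `B = ∑ αᵢ^m wᵢ`, `W = ∑ wᵢ` and `m = 2q`, the claim `A / W ≤ (A / B)^(m+1)`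
is a rearrangement of `B^(m+1) ≤ A^m W`, which is the weighted Hölder inequality with exponent
`(m+1)/m` applied to the functions `1` and `αᵢ^m` (the power mean of order `m` is at most the
power mean of order `m+1`). If `α₁ = 1` then `w₁ ≤ A`, which gives the second bound.
-/

open Finset

theorem Real.sum_pow_mul_pow_succ_le {ι : Type*} (s : Finset ι) (m : ℕ) {α w : ι → ℝ}
    (hα : ∀ i, 0 ≤ α i) (hw : ∀ i, 0 ≤ w i) :
    (∑ i ∈ s, α i ^ m * w i) ^ (m + 1) ≤ (∑ i ∈ s, α i ^ (m + 1) * w i) ^ m * ∑ i ∈ s, w i := by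
  rcases m.eq_zero_or_pos with rfl | hm
  · simp
  set A := ∑ i ∈ s, α i ^ (m + 1) * w i
  set W := ∑ i ∈ s, w i
  have hA : 0 ≤ A := sum_nonneg fun i _ ↦ mul_nonneg (pow_nonneg (hα i) _) (hw i)
  have hW : 0 ≤ W := sum_nonneg fun i _ ↦ hw i
  have hm' : (m : ℝ) ≠ 0 := by positivity
  have hp : (1 : ℝ) ≤ (m + 1) / m := by rw [le_div_iff₀ (by positivity)]; linarith
  have hpow (i : ι) : (α i ^ m) ^ (((m : ℝ) + 1) / m) = α i ^ (m + 1) := by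
    rw [← Real.rpow_natCast_mul (hα i), mul_div_cancel₀ _ hm', ← Real.rpow_natCast]
    push_cast
    rfl
  have holder : ∑ i ∈ s, α i ^ m * w i ≤ W ^ ((1 : ℝ) / (m + 1)) * A ^ ((m : ℝ) / (m + 1)) := by
    have h := inner_le_weight_mul_Lp_of_nonneg s hp w (fun i ↦ α i ^ m) hw
      (fun i ↦ pow_nonneg (hα i) m)
    have hexp : 1 - (m : ℝ) / (m + 1) = 1 / (m + 1) := by field_simp; ring
    simpa only [hpow, inv_div, hexp, mul_comm (w _)] using h
  calc (∑ i ∈ s, α i ^ m * w i) ^ (m + 1)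
      ≤ (W ^ ((1 : ℝ) / (m + 1)) * A ^ ((m : ℝ) / (m + 1))) ^ (m + 1) := by
        gcongr
        exact sum_nonneg fun i _ ↦ mul_nonneg (pow_nonneg (hα i) _) (hw i)
    _ = A ^ m * W := by
      rw [mul_pow, ← Real.rpow_mul_natCast hW, ← Real.rpow_mul_natCast hA]
      push_cast
      rw [one_div_mul_cancel (by positivity), div_mul_cancel₀ _ (by positivity),
        Real.rpow_one, Real.rpow_natCast, mul_comm]

theorem div_le_div_pow_succ_of_pow_succ_le {A B W : ℝ} {m : ℕ} (hA : 0 ≤ A) (hB : 0 < B)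
    (hW : 0 ≤ W) (h : B ^ (m + 1) ≤ A ^ m * W) : A / W ≤ (A / B) ^ (m + 1) := by
  rcases hW.eq_or_lt with rfl | hW
  · simp only [div_zero]
    positivity
  rw [div_pow, div_le_div_iff₀ hW (pow_pos hB _)]
  calc A * B ^ (m + 1) ≤ A * (A ^ m * W) := by gcongr
    _ = A ^ (m + 1) * W := by ring

theorem stmt_1_general (n q : ℕ) (α w : Fin n → ℝ)
    (hα : ∀ i, 0 ≤ α i) (hw : ∀ i, 0 ≤ w i)
    (hpos : 0 < ∑ i, α i ^ (2 * q) * w i) (i₁ : Fin n) :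
    ((∑ i, α i ^ (2 * q + 1) * w i) / (∑ i, α i ^ (2 * q) * w i)) ^ (2 * q + 1) ≥
        (∑ i, α i ^ (2 * q + 1) * w i) / (∑ i, w i) ∧
      (α i₁ = 1 →
        ((∑ i, α i ^ (2 * q + 1) * w i) / (∑ i, α i ^ (2 * q) * w i)) ^ (2 * q + 1) ≥
          w i₁ / (∑ i, w i)) := by
  have hterm (i : Fin n) : 0 ≤ α i ^ (2 * q + 1) * w i := mul_nonneg (pow_nonneg (hα i) _) (hw i)
  have hW : 0 ≤ ∑ i, w i := sum_nonneg fun i _ ↦ hw i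
  have hratio := div_le_div_pow_succ_of_pow_succ_le (sum_nonneg fun i _ ↦ hterm i) hpos hW
    (Real.sum_pow_mul_pow_succ_le univ (2 * q) hα hw)
  refine ⟨hratio, fun h₁ ↦ le_trans ?_ hratio⟩
  have hw₁ : w i₁ ≤ ∑ i, α i ^ (2 * q + 1) * w i := by
    simpa [h₁] using single_le_sum (fun i _ ↦ hterm i) (mem_univ i₁)
  exact div_le_div_of_nonneg_right hw₁ hW

/-- Key inequality for the ratio R in the analysis of randomized SVD for PSD matrices. -/
theorem stmt_1 (n q : ℕ) (hq : 1 ≤ q) (α w : Fin n → ℝ)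
    (hα : ∀ i, 0 ≤ α i) (hw : ∀ i, 0 ≤ w i)
    (hpos : 0 < ∑ i, α i ^ (2 * q) * w i) (hw1 : ∃ i, 0 < w i) (i₁ : Fin n) :
    ((∑ i, α i ^ (2 * q + 1) * w i) / (∑ i, α i ^ (2 * q) * w i)) ^ (2 * q + 1) ≥
        (∑ i, α i ^ (2 * q + 1) * w i) / (∑ i, w i) ∧
      (α i₁ = 1 →
        ((∑ i, α i ^ (2 * q + 1) * w i) / (∑ i, α i ^ (2 * q) * w i)) ^ (2 * q + 1) ≥
          w i₁ / (∑ i, w i)) :=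
  stmt_1_general n q α w hα hw hpos i₁
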